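/- arXiv:1911.02895 — 14 statements merged into one kernel-verified Lean document; each statement's English description precedes it below -/
import Mathlib

section
/- Suppose λ·μ·a_{b1} = (1−λ)·μ·a_{b2} < 0, i.e. ã1 = ã2 < 0. Then the values ρ1 = ρ2 = (1/(−4ã1))·(1 + √(1 + (4ã1·b)²)) satisfy the Configuration-I equilibrium equations and the geometric constraints; in particular ρ1 = ρ2 > b. Moreover, this is the unique solution of the equilibrium equations and constraints with ρ1 = ρ2. -/
/-- In Configuration I with ã1 = λμa_{b1} = (1−λ)μa_{b2} = ã2 < 0,
the values ρ1 = ρ2 = (1/(−4ã1))·(1 + √(1 + (4ã1b)²)) satisfy the equilibrium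
equations and geometric constraints (in particular exceed b), and this is the
unique such solution with ρ1 = ρ2. -/
theorem stmt5 (μ lam ab1 ab2 b ta1 ta2 ρ : ℝ)
    (hμ : μ > 0) (hlam1 : 0 < lam) (hlam2 : lam < 1)
    (hab1 : ab1 ∈ Set.Icc (-1 : ℝ) 1) (hab2 : ab2 ∈ Set.Icc (-1 : ℝ) 1)
    (hb : b > 0)
    (hta1 : ta1 = lam * μ * ab1) (hta2 : ta2 = (1 - lam) * μ * ab2)
    (heq : ta1 = ta2) (hneg : ta1 < 0)
    (hρ : ρ = (1 / (-(4 * ta1))) * (1 + Real.sqrt (1 + (4 * ta1 * b) ^ 2))) :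
    (ta2 * (ρ ^ 2 + ρ ^ 2 - 4 * b ^ 2) + 2 * ta1 * ρ * ρ + 2 * ρ = 0 ∧
      ta1 * (ρ ^ 2 + ρ ^ 2 - 4 * b ^ 2) + 2 * ta2 * ρ * ρ + 2 * ρ = 0 ∧
      ρ > 0 ∧ ρ + ρ > 2 * b ∧ |ρ - ρ| < 2 * b ∧ ρ > b) ∧
    (∀ ρ1 ρ2 : ℝ, ρ1 = ρ2 →
      ta2 * (ρ1 ^ 2 + ρ2 ^ 2 - 4 * b ^ 2) + 2 * ta1 * ρ1 * ρ2 + 2 * ρ2 = 0 →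
      ta1 * (ρ1 ^ 2 + ρ2 ^ 2 - 4 * b ^ 2) + 2 * ta2 * ρ1 * ρ2 + 2 * ρ1 = 0 →
      ρ1 > 0 → ρ2 > 0 → ρ1 + ρ2 > 2 * b → |ρ1 - ρ2| < 2 * b →
      ρ1 = ρ ∧ ρ2 = ρ) := by
  have hta : ta2 = ta1 := heq.symm
  rw [hta]
  set s : ℝ := Real.sqrt (1 + (4 * ta1 * b) ^ 2) with hs
  have hs0 : 0 ≤ s := Real.sqrt_nonneg _
  have hs2 : s ^ 2 = 1 + (4 * ta1 * b) ^ 2 := by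
    rw [hs]; exact Real.sq_sqrt (by positivity)
  have h4 : 0 < -(4 * ta1) := by linarith
  have h4ne : (4 * ta1) ≠ 0 := by linarith
  have hxneg : 4 * ta1 * b < 0 := by nlinarith
  have hx : 0 < (4 * ta1 * b) ^ 2 := by positivity
  have hs1 : 1 < s := by nlinarith
  have hsb : -(4 * ta1 * b) ≤ s := by
    have h1 : Real.sqrt ((4 * ta1 * b) ^ 2) ≤ s := by
      apply Real.sqrt_le_sqrt; nlinarith
    rw [Real.sqrt_sq_eq_abs] at h1
    exact (neg_le_abs _).trans h1
  have hρ' : -(4 * ta1) * ρ = 1 + s := by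
    rw [hρ]; field_simp
    exact div_self (by linarith)
  have h1 : 4 * ta1 * ρ + 1 = -s := by linarith
  have key : 2 * ta1 * ρ ^ 2 + ρ - 2 * ta1 * b ^ 2 = 0 := by
    have h2 : (8 * ta1) * (2 * ta1 * ρ ^ 2 + ρ - 2 * ta1 * b ^ 2) = 0 := by
      linear_combination (4 * ta1 * ρ + 1 - s) * h1 + hs2
    have h8ne : (8 * ta1) ≠ 0 := by linarith
    exact (mul_eq_zero.mp h2).resolve_left h8ne
  have hρb : ρ > b := by
    rw [gt_iff_lt, hρ, one_div, ← div_eq_inv_mul, lt_div_iff₀ h4]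
    nlinarith [hsb]
  have hρ0 : ρ > 0 := lt_trans hb hρb
  constructor
  · refine ⟨by linear_combination 2 * key, by linear_combination 2 * key, hρ0, by linarith, ?_, hρb⟩
    simp only [sub_self, abs_zero]
    linarith
  · rintro ρ1 ρ2 rfl e1 e2 hp1 hp2 hsum habs
    have key2 : 2 * ta1 * ρ1 ^ 2 + ρ1 - 2 * ta1 * b ^ 2 = 0 := by linear_combination e1 / 2
    have hsq : (4 * ta1 * ρ1 + 1 - s) * (4 * ta1 * ρ1 + 1 + s) = 0 := by
      linear_combination 8 * ta1 * key2 - hs2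
    rcases mul_eq_zero.mp hsq with h | h
    · exfalso
      nlinarith [mul_pos hp1 (neg_pos.mpr hneg)]
    · have h0 : 4 * ta1 * (ρ1 - ρ) = 0 := by linear_combination h + hρ'
      have h12 : ρ1 = ρ := by
        rcases mul_eq_zero.mp h0 with h' | h'
        · exact absurd h' h4ne
        · linarith [sub_eq_zero.mp h']
      exact ⟨h12, h12⟩
end

section
/- Suppose λ·a_{b1} + (1−λ)·a_{b2} < 0 and λ·a_{b1} ≠ (1−λ)·a_{b2}, i.e. ã1 + ã2 < 0 and ã1 ≠ ã2. Define ρ+ = (1 + √(1 + (2b(ã1 + ã2))²))/(−(ã1 + ã2)) and ρ− = (−1 + √(1 + (2b(ã2 − ã1))²))/(ã2 − ã1). Then ρ1 = (ρ+ − ρ−)/2 and ρ2 = (ρ+ + ρ−)/2 satisfy the Configuration-I equilibrium equations and the geometric constraints; in particular ρ+ > 2b, |ρ−| < 2b, ρ1 > 0 and ρ2 > 0. -/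
/-!
Adding and subtracting the two equilibrium equations shows that, in the coordinates
`ρ₊ = ρ₂ + ρ₁` and `ρ₋ = ρ₂ - ρ₁`, they decouple into the two quadratics
`(ã₁ + ã₂)(ρ₊² - 4b²) + 2ρ₊ = 0` and `(ã₂ - ã₁)(ρ₋² - 4b²) + 2ρ₋ = 0`, of which the given
`ρ±` are roots by the quadratic formula. The geometric constraints become `ρ₊ > 2b` and
`|ρ₋| < 2b`, which follow from `|x| < √(1 + x²) < 1 + |x|` for `x ≠ 0`.
-/

open Real

lemma mul_sq_sub_add_eq_zero_of_sq_eq {t b r : ℝ} (ht : t ≠ 0)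
    (hr : r ^ 2 = 1 + (2 * b * t) ^ 2) :
    t * (((-1 + r) / t) ^ 2 - 4 * b ^ 2) + 2 * ((-1 + r) / t) = 0 := by
  field_simp
  linear_combination hr

lemma equilibrium_of_decoupled {ta1 ta2 b ρp ρm : ℝ}
    (hp : (ta1 + ta2) * (ρp ^ 2 - 4 * b ^ 2) + 2 * ρp = 0)
    (hm : (ta2 - ta1) * (ρm ^ 2 - 4 * b ^ 2) + 2 * ρm = 0) :
    ta2 * (((ρp - ρm) / 2) ^ 2 + ((ρp + ρm) / 2) ^ 2 - 4 * b ^ 2)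
        + 2 * ta1 * ((ρp - ρm) / 2) * ((ρp + ρm) / 2) + 2 * ((ρp + ρm) / 2) = 0 ∧
    ta1 * (((ρp - ρm) / 2) ^ 2 + ((ρp + ρm) / 2) ^ 2 - 4 * b ^ 2)
        + 2 * ta2 * ((ρp - ρm) / 2) * ((ρp + ρm) / 2) + 2 * ((ρp - ρm) / 2) = 0 :=
  ⟨by linear_combination (hp + hm) / 2, by linear_combination (hp - hm) / 2⟩

lemma two_mul_lt_one_add_sqrt_div_neg {b s : ℝ} (hs : s < 0) :
    2 * b < (1 + √(1 + (2 * b * s) ^ 2)) / -s := by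
  rw [lt_div_iff₀ (neg_pos.mpr hs)]
  have : |2 * b * s| ≤ √(1 + (2 * b * s) ^ 2) := by
    rw [← sqrt_sq_eq_abs]
    exact sqrt_le_sqrt (by linarith)
  linarith [neg_le_abs (2 * b * s)]

lemma abs_sqrt_sub_one_div_lt {b d : ℝ} (hb : 0 < b) (hd : d ≠ 0) :
    |(-1 + √(1 + (2 * b * d) ^ 2)) / d| < 2 * b := by
  have hx : 0 < |2 * b * d| := abs_pos.mpr (mul_ne_zero (by positivity) hd)
  have hlower : 1 ≤ √(1 + (2 * b * d) ^ 2) := one_le_sqrt.mpr (by nlinarith)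
  have hupper : √(1 + (2 * b * d) ^ 2) < 1 + |2 * b * d| := by
    rw [sqrt_lt' (by positivity)]
    nlinarith [sq_abs (2 * b * d)]
  rw [abs_div, div_lt_iff₀ (abs_pos.mpr hd), abs_of_nonneg (by linarith)]
  rw [abs_mul, abs_of_pos (by positivity : (0 : ℝ) < 2 * b)] at hupper
  linarith

lemma geometric_constraints_of_bounds {b ρp ρm : ℝ} (hp : 2 * b < ρp) (hm : |ρm| < 2 * b) :
    (ρp - ρm) / 2 > 0 ∧ (ρp + ρm) / 2 > 0 ∧ (ρp - ρm) / 2 + (ρp + ρm) / 2 > 2 * b ∧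
      |(ρp - ρm) / 2 - (ρp + ρm) / 2| < 2 * b := by
  obtain ⟨hm₁, hm₂⟩ := abs_lt.mp hm
  refine ⟨by linarith, by linarith, by linarith, ?_⟩
  rwa [show (ρp - ρm) / 2 - (ρp + ρm) / 2 = -ρm by ring, abs_neg]

theorem stmt6_general (b ta1 ta2 ρp ρm ρ1 ρ2 : ℝ)
    (hb : b > 0)
    (hsum : ta1 + ta2 < 0) (hne : ta1 ≠ ta2)
    (hρp : ρp = (1 + Real.sqrt (1 + (2 * b * (ta1 + ta2)) ^ 2)) / (-(ta1 + ta2)))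
    (hρm : ρm = (-1 + Real.sqrt (1 + (2 * b * (ta2 - ta1)) ^ 2)) / (ta2 - ta1))
    (hρ1 : ρ1 = (ρp - ρm) / 2) (hρ2 : ρ2 = (ρp + ρm) / 2) :
    ta2 * (ρ1 ^ 2 + ρ2 ^ 2 - 4 * b ^ 2) + 2 * ta1 * ρ1 * ρ2 + 2 * ρ2 = 0 ∧
    ta1 * (ρ1 ^ 2 + ρ2 ^ 2 - 4 * b ^ 2) + 2 * ta2 * ρ1 * ρ2 + 2 * ρ1 = 0 ∧
    ρ1 > 0 ∧ ρ2 > 0 ∧ ρ1 + ρ2 > 2 * b ∧ |ρ1 - ρ2| < 2 * b ∧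
    ρp > 2 * b ∧ |ρm| < 2 * b := by
  have hd : ta2 - ta1 ≠ 0 := sub_ne_zero.mpr hne.symm
  have hρp' : ρp = (-1 + -√(1 + (2 * b * (ta1 + ta2)) ^ 2)) / (ta1 + ta2) := by
    rw [hρp, div_neg, ← neg_div]
    ring
  have hquad_p : (ta1 + ta2) * (ρp ^ 2 - 4 * b ^ 2) + 2 * ρp = 0 := by
    rw [hρp']
    exact mul_sq_sub_add_eq_zero_of_sq_eq hsum.ne (by rw [neg_sq, sq_sqrt (by positivity)])
  have hquad_m : (ta2 - ta1) * (ρm ^ 2 - 4 * b ^ 2) + 2 * ρm = 0 := by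
    rw [hρm]
    exact mul_sq_sub_add_eq_zero_of_sq_eq hd (sq_sqrt (by positivity))
  have hp : 2 * b < ρp := hρp ▸ two_mul_lt_one_add_sqrt_div_neg hsum
  have hm : |ρm| < 2 * b := hρm ▸ abs_sqrt_sub_one_div_lt hb hd
  subst hρ1 hρ2
  obtain ⟨heq₁, heq₂⟩ := equilibrium_of_decoupled hquad_p hquad_m
  obtain ⟨hρ1, hρ2, hsum_gt, hdiff_lt⟩ := geometric_constraints_of_bounds hp hm
  exact ⟨heq₁, heq₂, hρ1, hρ2, hsum_gt, hdiff_lt, hp, hm⟩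

/-- In Configuration I with ã1 + ã2 < 0 and ã1 ≠ ã2, the values
ρ1 = (ρ+ − ρ−)/2, ρ2 = (ρ+ + ρ−)/2 built from the displayed formulas for ρ+
and ρ− satisfy the equilibrium equations and geometric constraints. -/
theorem stmt6 (μ lam ab1 ab2 b ta1 ta2 ρp ρm ρ1 ρ2 : ℝ)
    (hμ : μ > 0) (hlam1 : 0 < lam) (hlam2 : lam < 1)
    (hab1 : ab1 ∈ Set.Icc (-1 : ℝ) 1) (hab2 : ab2 ∈ Set.Icc (-1 : ℝ) 1)
    (hb : b > 0)
    (hta1 : ta1 = lam * μ * ab1) (hta2 : ta2 = (1 - lam) * μ * ab2)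
    (hsum : ta1 + ta2 < 0) (hne : ta1 ≠ ta2)
    (hρp : ρp = (1 + Real.sqrt (1 + (2 * b * (ta1 + ta2)) ^ 2)) / (-(ta1 + ta2)))
    (hρm : ρm = (-1 + Real.sqrt (1 + (2 * b * (ta2 - ta1)) ^ 2)) / (ta2 - ta1))
    (hρ1 : ρ1 = (ρp - ρm) / 2) (hρ2 : ρ2 = (ρp + ρm) / 2) :
    ta2 * (ρ1 ^ 2 + ρ2 ^ 2 - 4 * b ^ 2) + 2 * ta1 * ρ1 * ρ2 + 2 * ρ2 = 0 ∧
    ta1 * (ρ1 ^ 2 + ρ2 ^ 2 - 4 * b ^ 2) + 2 * ta2 * ρ1 * ρ2 + 2 * ρ1 = 0 ∧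
    ρ1 > 0 ∧ ρ2 > 0 ∧ ρ1 + ρ2 > 2 * b ∧ |ρ1 - ρ2| < 2 * b ∧
    ρp > 2 * b ∧ |ρm| < 2 * b :=
  stmt6_general b ta1 ta2 ρp ρm ρ1 ρ2 hb hsum hne hρp hρm hρ1 hρ2
end

section
/- Suppose a_{b2} = 0 and a_{b1} < 0, so that ã2 = 0 and ã1 = λ·μ·a_{b1} < 0. Then the values ρ1 = 1/(λμ(−a_{b1})) and ρ2 = √(ρ1² + (2b)²) satisfy the Configuration-I equilibrium equations and the geometric constraints. -/
/-! With `ã₂ = 0` both equilibrium equations factor through `ã₁ ρ₁ + 1`, which vanishes for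
`ρ₁ = -1/ã₁`; the second one also needs `ρ₂² - 4b² = ρ₁²`, i.e. the agent, beacon 1 and beacon 2
form a right triangle with legs `ρ₁` and `2b`, and a nondegenerate right triangle satisfies the
strict triangle inequalities. -/

lemma lt_add_sqrt_sq_add_sq {x y : ℝ} (hx : 0 < x) : y < x + √(x ^ 2 + y ^ 2) :=
  calc y ≤ √(x ^ 2 + y ^ 2) := Real.le_sqrt_of_sq_le (by nlinarith)
    _ < x + √(x ^ 2 + y ^ 2) := lt_add_of_pos_left _ hx

lemma abs_sub_sqrt_sq_add_sq_lt {x y : ℝ} (hx : 0 < x) (hy : 0 < y) :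
    |x - √(x ^ 2 + y ^ 2)| < y := by
  have hx_le : x ≤ √(x ^ 2 + y ^ 2) :=
    Real.le_sqrt_of_sq_le (by nlinarith)
  have h_lt : √(x ^ 2 + y ^ 2) < x + y :=
    (Real.sqrt_lt' (by positivity)).2 (by nlinarith)
  rw [abs_sub_lt_iff]
  constructor <;> linarith

lemma equilibrium_of_mul_eq_neg_one {a ρ₁ ρ₂ b : ℝ} (ha : a * ρ₁ = -1)
    (hρ₂ : ρ₂ ^ 2 = ρ₁ ^ 2 + (2 * b) ^ 2) :
    2 * a * ρ₁ * ρ₂ + 2 * ρ₂ = 0 ∧ a * (ρ₁ ^ 2 + ρ₂ ^ 2 - 4 * b ^ 2) + 2 * ρ₁ = 0 := by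
  constructor
  · linear_combination 2 * ρ₂ * ha
  · linear_combination a * hρ₂ + 2 * ρ₁ * ha

theorem stmt7_general (μ lam ab1 ab2 b ρ1 ρ2 : ℝ)
    (hμ : μ > 0) (hlam1 : 0 < lam)
    (hab2 : ab2 = 0) (hab1neg : ab1 < 0)
    (hb : b > 0)
    (hρ1 : ρ1 = 1 / (lam * μ * (-ab1)))
    (hρ2 : ρ2 = Real.sqrt (ρ1 ^ 2 + (2 * b) ^ 2)) :
    ((1 - lam) * μ * ab2) * (ρ1 ^ 2 + ρ2 ^ 2 - 4 * b ^ 2)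
        + 2 * (lam * μ * ab1) * ρ1 * ρ2 + 2 * ρ2 = 0 ∧
    (lam * μ * ab1) * (ρ1 ^ 2 + ρ2 ^ 2 - 4 * b ^ 2)
        + 2 * ((1 - lam) * μ * ab2) * ρ1 * ρ2 + 2 * ρ1 = 0 ∧
    ρ1 > 0 ∧ ρ2 > 0 ∧ ρ1 + ρ2 > 2 * b ∧ |ρ1 - ρ2| < 2 * b := by
  have hgain : lam * μ * ab1 < 0 := mul_neg_of_pos_of_neg (mul_pos hlam1 hμ) hab1neg
  rw [mul_neg] at hρ1
  have hρ1_pos : 0 < ρ1 := hρ1 ▸ one_div_pos.2 (neg_pos.2 hgain)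
  have hgain_mul : lam * μ * ab1 * ρ1 = -1 := by
    rw [hρ1, mul_one_div, div_neg, div_self hgain.ne]
  have hρ2_sq : ρ2 ^ 2 = ρ1 ^ 2 + (2 * b) ^ 2 := hρ2 ▸ Real.sq_sqrt (by positivity)
  obtain ⟨heq₁, heq₂⟩ := equilibrium_of_mul_eq_neg_one hgain_mul hρ2_sq
  subst hab2 hρ2
  refine ⟨by simpa using heq₁, by simpa using heq₂, hρ1_pos, by positivity,
    lt_add_sqrt_sq_add_sq hρ1_pos, abs_sub_sqrt_sq_add_sq_lt hρ1_pos (by positivity)⟩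

/-- In Configuration I with a_{b2} = 0 and a_{b1} < 0, the values
ρ1 = 1/(λμ(−a_{b1})) and ρ2 = √(ρ1² + (2b)²) satisfy the equilibrium equations
(with ã1 = λμa_{b1}, ã2 = (1−λ)μa_{b2} = 0) and the geometric constraints. -/
theorem stmt7 (μ lam ab1 ab2 b ρ1 ρ2 : ℝ)
    (hμ : μ > 0) (hlam1 : 0 < lam) (hlam2 : lam < 1)
    (hab1 : ab1 ∈ Set.Icc (-1 : ℝ) 1) (hab2 : ab2 = 0) (hab1neg : ab1 < 0)
    (hb : b > 0)
    (hρ1 : ρ1 = 1 / (lam * μ * (-ab1)))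
    (hρ2 : ρ2 = Real.sqrt (ρ1 ^ 2 + (2 * b) ^ 2)) :
    ((1 - lam) * μ * ab2) * (ρ1 ^ 2 + ρ2 ^ 2 - 4 * b ^ 2)
        + 2 * (lam * μ * ab1) * ρ1 * ρ2 + 2 * ρ2 = 0 ∧
    (lam * μ * ab1) * (ρ1 ^ 2 + ρ2 ^ 2 - 4 * b ^ 2)
        + 2 * ((1 - lam) * μ * ab2) * ρ1 * ρ2 + 2 * ρ1 = 0 ∧
    ρ1 > 0 ∧ ρ2 > 0 ∧ ρ1 + ρ2 > 2 * b ∧ |ρ1 - ρ2| < 2 * b :=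
  stmt7_general μ lam ab1 ab2 b ρ1 ρ2 hμ hlam1 hab2 hab1neg hb hρ1 hρ2
end

section
/- Let μ > 0, λ ∈ (0,1), and a ∈ [−1,1]. There exist ρ > 0, ρ1 > 0, ρ2 > 0, and x̃ ∈ [−1,1] satisfying the system (1−λ)μa + (1−x̃)/ρ = 0, (1−λ)μa·(ρ1² + ρ² − ρ2²)/(2ρρ1) + 1/ρ1 = 0, and (1−λ)μa·(ρ2² + ρ² − ρ1²)/(2ρρ2) + 1/ρ2 = 0, if and only if a < 0. Moreover, every such solution satisfies x̃ = −1, ρ1 = ρ2, and ρ = 2/((1−λ)μ(−a)). -/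
lemma stmt8_key (c ρ ρ1 ρ2 a : ℝ) (hc : 0 < c) (hρ : 0 < ρ) (h1 : 0 < ρ1) (h2 : 0 < ρ2)
    (e2 : c * a * ((ρ1 ^ 2 + ρ ^ 2 - ρ2 ^ 2) / (2 * ρ * ρ1)) + 1 / ρ1 = 0)
    (e3 : c * a * ((ρ2 ^ 2 + ρ ^ 2 - ρ1 ^ 2) / (2 * ρ * ρ2)) + 1 / ρ2 = 0) :
    ρ1 = ρ2 ∧ c * a * ρ = -2 := by
  have hρ' := hρ.ne'
  have h1' := h1.ne'
  have h2' := h2.ne'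
  have E2 : c * a * (ρ1 ^ 2 + ρ ^ 2 - ρ2 ^ 2) = -(2 * ρ) := by
    field_simp at e2; nlinarith [e2]
  have E3 : c * a * (ρ2 ^ 2 + ρ ^ 2 - ρ1 ^ 2) = -(2 * ρ) := by
    field_simp at e3; nlinarith [e3]
  have ha0 : a ≠ 0 := by
    rintro rfl; simp at E2; nlinarith
  have hsq : ρ1 ^ 2 = ρ2 ^ 2 := by
    have : c * a * (2 * (ρ1 ^ 2 - ρ2 ^ 2)) = 0 := by nlinarith [E2, E3]
    have hca : c * a ≠ 0 := mul_ne_zero hc.ne' ha0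
    have := mul_eq_zero.mp this
    rcases this with h | h
    · exact absurd h hca
    · nlinarith
  have h12 : ρ1 = ρ2 := by nlinarith [hsq]
  refine ⟨h12, ?_⟩
  subst h12
  have : c * a * ρ ^ 2 = -(2 * ρ) := by nlinarith [E2]
  have : ρ * (c * a * ρ + 2) = 0 := by nlinarith
  rcases mul_eq_zero.mp this with h | h
  · exact absurd h hρ'
  · linarith

/-- Configuration II with a0 = 0: the reduced equilibrium system has
a solution (ρ, ρ1, ρ2, x̃) with ρ, ρ1, ρ2 > 0 and x̃ ∈ [−1,1] iff a < 0; moreover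
every solution has x̃ = −1, ρ1 = ρ2, and ρ = 2/((1−λ)μ(−a)). -/
theorem stmt8 (μ lam a : ℝ) (hμ : μ > 0) (hlam1 : 0 < lam) (hlam2 : lam < 1)
    (ha : a ∈ Set.Icc (-1 : ℝ) 1) :
    ((∃ ρ ρ1 ρ2 xt : ℝ, ρ > 0 ∧ ρ1 > 0 ∧ ρ2 > 0 ∧ xt ∈ Set.Icc (-1 : ℝ) 1 ∧
        (1 - lam) * μ * a + (1 - xt) / ρ = 0 ∧
        (1 - lam) * μ * a * ((ρ1 ^ 2 + ρ ^ 2 - ρ2 ^ 2) / (2 * ρ * ρ1)) + 1 / ρ1 = 0 ∧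
        (1 - lam) * μ * a * ((ρ2 ^ 2 + ρ ^ 2 - ρ1 ^ 2) / (2 * ρ * ρ2)) + 1 / ρ2 = 0) ↔
      a < 0) ∧
    (∀ ρ ρ1 ρ2 xt : ℝ, ρ > 0 → ρ1 > 0 → ρ2 > 0 → xt ∈ Set.Icc (-1 : ℝ) 1 →
      (1 - lam) * μ * a + (1 - xt) / ρ = 0 →
      (1 - lam) * μ * a * ((ρ1 ^ 2 + ρ ^ 2 - ρ2 ^ 2) / (2 * ρ * ρ1)) + 1 / ρ1 = 0 →
      (1 - lam) * μ * a * ((ρ2 ^ 2 + ρ ^ 2 - ρ1 ^ 2) / (2 * ρ * ρ2)) + 1 / ρ2 = 0 →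
      xt = -1 ∧ ρ1 = ρ2 ∧ ρ = 2 / ((1 - lam) * μ * (-a))) := by
  have hc : 0 < (1 - lam) * μ := by nlinarith
  constructor
  · constructor
    · rintro ⟨ρ, ρ1, ρ2, xt, hρ, hρ1, hρ2, hxt, e1, e2, e3⟩
      obtain ⟨-, hkey⟩ := stmt8_key _ ρ ρ1 ρ2 a hc hρ hρ1 hρ2 e2 e3
      nlinarith [hkey, mul_pos hc hρ]
    · intro haneg
      have ha' : a ≠ 0 := haneg.ne
      have hcna : 0 < (1 - lam) * μ * (-a) := by nlinarith
      set ρ : ℝ := 2 / ((1 - lam) * μ * (-a)) with hρdef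
      have hρpos : 0 < ρ := by positivity
      have hρ' := hρpos.ne'
      have hmul : (1 - lam) * μ * a * ρ = -2 := by
        rw [hρdef, mul_div_assoc', div_eq_iff hcna.ne']; ring
      clear_value ρ
      have hhalf : (ρ ^ 2 + ρ ^ 2 - ρ ^ 2) / (2 * ρ * ρ) = 1 / 2 := by
        rw [div_eq_div_iff (by positivity) two_ne_zero]; ring
      have h1ρ : 1 / ρ = -((1 - lam) * μ * a) / 2 := by
        rw [div_eq_div_iff hρ' two_ne_zero]; linarith [hmul]
      refine ⟨ρ, ρ, ρ, -1, hρpos, hρpos, hρpos, ⟨le_refl _, by norm_num⟩, ?_, ?_, ?_⟩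
      · have : (1 - (-1 : ℝ)) / ρ = 2 * (1 / ρ) := by ring
        rw [this, h1ρ]; ring
      all_goals rw [hhalf, h1ρ]; ring
  · intro ρ ρ1 ρ2 xt hρ hρ1 hρ2 hxt e1 e2 e3
    obtain ⟨h12, hkey⟩ := stmt8_key _ ρ ρ1 ρ2 a hc hρ hρ1 hρ2 e2 e3
    have ha0 : a < 0 := by nlinarith [mul_pos hc hρ]
    have hxt1 : xt = -1 := by
      have : ((1 - lam) * μ * a + (1 - xt) / ρ) * ρ = 0 := by rw [e1]; ring
      have h2 : (1 - lam) * μ * a * ρ + (1 - xt) = 0 := by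
        field_simp at this; linarith [this]
      linarith [h2, hkey]
    refine ⟨hxt1, h12, ?_⟩
    have hcna : 0 < (1 - lam) * μ * (-a) := by nlinarith
    rw [eq_div_iff hcna.ne']
    linear_combination -hkey
end

section
/- Let μ > 0, λ ∈ (0,1), let a be real and a0 a nonzero real, and let ρ > 0, ρ1 > 0, ρ2 > 0 be real. If λμa0·(ρ1 − ρ2)·((ρ1 + ρ2)² − ρ²)/(2ρρ1ρ2) = 0 and (1−λ)μa·(ρ1 − ρ2)·((ρ1 + ρ2)² − ρ²)/(2ρρ1ρ2) + (ρ2 − ρ1)/(ρ1ρ2) = 0, then ρ1 = ρ2. -/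
/-! Both expressions are multiples of the common factor
`P = (ρ1 - ρ2) * ((ρ1 + ρ2) ^ 2 - ρ ^ 2) / (2 * ρ * ρ1 * ρ2)`. The first one, with the nonzero
coefficient `lam * μ * a0`, forces `P = 0`; the second then reduces to `(ρ2 - ρ1) / (ρ1 * ρ2) = 0`. -/

theorem stmt9_general (μ lam a a0 ρ ρ1 ρ2 : ℝ)
    (hμ : μ > 0) (hlam1 : 0 < lam) (ha0 : a0 ≠ 0)
    (h1 : ρ1 > 0) (h2 : ρ2 > 0)
    (e1 : lam * μ * a0 * (ρ1 - ρ2) * ((ρ1 + ρ2) ^ 2 - ρ ^ 2) / (2 * ρ * ρ1 * ρ2) = 0)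
    (e2 : (1 - lam) * μ * a * (ρ1 - ρ2) * ((ρ1 + ρ2) ^ 2 - ρ ^ 2) / (2 * ρ * ρ1 * ρ2)
        + (ρ2 - ρ1) / (ρ1 * ρ2) = 0) :
    ρ1 = ρ2 := by
  set P := (ρ1 - ρ2) * ((ρ1 + ρ2) ^ 2 - ρ ^ 2) / (2 * ρ * ρ1 * ρ2) with hP_def
  have hP : P = 0 := by
    have hcoeff : lam * μ * a0 * P = 0 := by rw [← e1, hP_def]; ring
    exact (mul_eq_zero.mp hcoeff).resolve_left (by positivity)
  have hdiff : (ρ2 - ρ1) / (ρ1 * ρ2) = 0 := by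
    have hsplit : (1 - lam) * μ * a * P + (ρ2 - ρ1) / (ρ1 * ρ2) = 0 := by rw [← e2, hP_def]; ring
    rwa [hP, mul_zero, zero_add] at hsplit
  have hsub : ρ2 - ρ1 = 0 := (div_eq_zero_iff.mp hdiff).resolve_right (by positivity)
  linarith

/-- Configuration II with a0 ≠ 0: vanishing of the two difference
expressions forces equal beacon distances ρ1 = ρ2. -/
theorem stmt9 (μ lam a a0 ρ ρ1 ρ2 : ℝ)
    (hμ : μ > 0) (hlam1 : 0 < lam) (hlam2 : lam < 1) (ha0 : a0 ≠ 0)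
    (hρ : ρ > 0) (h1 : ρ1 > 0) (h2 : ρ2 > 0)
    (e1 : lam * μ * a0 * (ρ1 - ρ2) * ((ρ1 + ρ2) ^ 2 - ρ ^ 2) / (2 * ρ * ρ1 * ρ2) = 0)
    (e2 : (1 - lam) * μ * a * (ρ1 - ρ2) * ((ρ1 + ρ2) ^ 2 - ρ ^ 2) / (2 * ρ * ρ1 * ρ2)
        + (ρ2 - ρ1) / (ρ1 * ρ2) = 0) :
    ρ1 = ρ2 :=
  stmt9_general μ lam a a0 ρ ρ1 ρ2 hμ hlam1 ha0 h1 h2 e1 e2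
end

section
/- Let μ > 0, λ ∈ (0,1), and a, a0 ∈ [−1,1] with a0 ≠ 0. If (1−λ)a + λa0 < 0, then x̃ = −1, ρ1 = 1/(−μ((1−λ)a + λa0)), and ρ = 2ρ1 satisfy ρ > 0, ρ1 > 0, and the Configuration-II equilibrium equations (E1) (1−λ)μa + λμa0·ρ/(2ρ1) + (1−x̃)/ρ = 0 and (E2) (1−λ)μa·ρ/(2ρ1) + λμa0 + 1/ρ1 = 0. -/
theorem stmt10_general (μ lam a a0 xt ρ ρ1 : ℝ)
    (hμ : μ > 0)
    (hcond : (1 - lam) * a + lam * a0 < 0)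
    (hxt : xt = -1)
    (hρ1 : ρ1 = 1 / (-(μ * ((1 - lam) * a + lam * a0))))
    (hρ : ρ = 2 * ρ1) :
    ρ > 0 ∧ ρ1 > 0 ∧
    (1 - lam) * μ * a + lam * μ * a0 * (ρ / (2 * ρ1)) + (1 - xt) / ρ = 0 ∧
    (1 - lam) * μ * a * (ρ / (2 * ρ1)) + lam * μ * a0 + 1 / ρ1 = 0 := by
  have hgain : 0 < -(μ * ((1 - lam) * a + lam * a0)) := by
    rw [← mul_neg]
    exact mul_pos hμ (neg_pos.2 hcond)
  have hρ1pos : 0 < ρ1 := hρ1 ▸ one_div_pos.2 hgain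
  have hinv : 1 / ρ1 = -(μ * ((1 - lam) * a + lam * a0)) := by rw [hρ1, one_div_one_div]
  have hratio : ρ / (2 * ρ1) = 1 := by rw [hρ]; exact div_self (by positivity)
  have hrepulsion : (1 - xt) / ρ = 1 / ρ1 := by rw [hxt, hρ]; field_simp; norm_num
  refine ⟨by rw [hρ]; positivity, hρ1pos, ?_, ?_⟩
  · rw [hratio, hrepulsion, hinv]; ring
  · rw [hratio, hinv]; ring

/-- Configuration II, collinear circling equilibrium: if
(1−λ)a + λa0 < 0, then x̃ = −1, ρ1 = 1/(−μ((1−λ)a + λa0)), ρ = 2ρ1 satisfy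
positivity and the equilibrium equations (E1) and (E2). -/
theorem stmt10 (μ lam a a0 xt ρ ρ1 : ℝ)
    (hμ : μ > 0) (hlam1 : 0 < lam) (hlam2 : lam < 1)
    (ha : a ∈ Set.Icc (-1 : ℝ) 1) (ha0 : a0 ∈ Set.Icc (-1 : ℝ) 1) (ha0ne : a0 ≠ 0)
    (hcond : (1 - lam) * a + lam * a0 < 0)
    (hxt : xt = -1)
    (hρ1 : ρ1 = 1 / (-(μ * ((1 - lam) * a + lam * a0))))
    (hρ : ρ = 2 * ρ1) :
    ρ > 0 ∧ ρ1 > 0 ∧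
    (1 - lam) * μ * a + lam * μ * a0 * (ρ / (2 * ρ1)) + (1 - xt) / ρ = 0 ∧
    (1 - lam) * μ * a * (ρ / (2 * ρ1)) + lam * μ * a0 + 1 / ρ1 = 0 :=
  stmt10_general μ lam a a0 xt ρ ρ1 hμ hcond hxt hρ1 hρ
end

section
/- Let μ > 0, λ ∈ (0,1), and a, a0 ∈ [−1,1] with a0 < 0, a > 0, and (1−λ)a + λa0 < 0. Set D = (1−λ)²a² − λ²a0². Then x̃ = 1, ρ1 = λa0/(μD), and ρ = −2(1−λ)a/(μD) satisfy ρ1 > 0, ρ > 0, ρ < 2ρ1, and the Configuration-II equilibrium equations (E1) (1−λ)μa + λμa0·ρ/(2ρ1) + (1−x̃)/ρ = 0 and (E2) (1−λ)μa·ρ/(2ρ1) + λμa0 + 1/ρ1 = 0. -/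
/-! Write `s = (1 - λ) a > 0` and `t = λ a0`, so that `s + t < 0`, hence `t < 0` and
`D = s² - t² = (s + t)(s - t) < 0`. Then `ρ1 = t / (μ D)` and `ρ = -2s / (μ D)` are positive,
`ρ < 2ρ1` is `s + t < 0` divided by `μ D < 0`, and `ρ / (2ρ1) = -s / t`, with which both
equilibrium equations become identities in `s` and `t`. -/

section CirclingEquilibrium

variable {μ s t c D : ℝ}

lemma sq_sub_sq_neg_of_pos_of_add_neg (hs : 0 < s) (hst : s + t < 0) : s ^ 2 - t ^ 2 < 0 := by
  rw [sq_sub_sq]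
  exact mul_neg_of_neg_of_pos hst (by linarith)

lemma neg_two_mul_div_lt_two_mul_div (hc : c < 0) (hst : s + t < 0) :
    -(2 * s) / c < 2 * (t / c) := by
  rw [mul_div_assoc', div_lt_div_right_of_neg hc]
  linarith

lemma neg_two_mul_div_div_two_mul_div (hc : c ≠ 0) (ht : t ≠ 0) :
    -(2 * s) / c / (2 * (t / c)) = -s / t := by
  field_simp

lemma add_mul_neg_div_self (ht : t ≠ 0) : μ * s + μ * t * (-s / t) = 0 := by
  field_simp
  ring

lemma mul_neg_div_add_add_one_div_div (ht : t ≠ 0) (hD : D = s ^ 2 - t ^ 2) :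
    μ * s * (-s / t) + μ * t + 1 / (t / (μ * D)) = 0 := by
  rw [one_div_div, hD]
  field_simp
  ring

end CirclingEquilibrium

theorem stmt11_general (μ lam a a0 D xt ρ ρ1 : ℝ)
    (hμ : μ > 0) (hlam2 : lam < 1)
    (hapos : a > 0)
    (hcond : (1 - lam) * a + lam * a0 < 0)
    (hD : D = (1 - lam) ^ 2 * a ^ 2 - lam ^ 2 * a0 ^ 2)
    (hxt : xt = 1)
    (hρ1 : ρ1 = lam * a0 / (μ * D))
    (hρ : ρ = -(2 * (1 - lam) * a) / (μ * D)) :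
    ρ1 > 0 ∧ ρ > 0 ∧ ρ < 2 * ρ1 ∧
    (1 - lam) * μ * a + lam * μ * a0 * (ρ / (2 * ρ1)) + (1 - xt) / ρ = 0 ∧
    (1 - lam) * μ * a * (ρ / (2 * ρ1)) + lam * μ * a0 + 1 / ρ1 = 0 := by
  have hs : 0 < (1 - lam) * a := mul_pos (sub_pos.2 hlam2) hapos
  have ht : lam * a0 < 0 := by linarith
  have hDst : D = ((1 - lam) * a) ^ 2 - (lam * a0) ^ 2 := by rw [hD]; ring
  have hμD : μ * D < 0 :=
    mul_neg_of_pos_of_neg hμ (hDst ▸ sq_sub_sq_neg_of_pos_of_add_neg hs hcond)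
  have hratio : ρ / (2 * ρ1) = -((1 - lam) * a) / (lam * a0) := by
    rw [hρ, hρ1, mul_assoc]
    exact neg_two_mul_div_div_two_mul_div hμD.ne ht.ne
  refine ⟨hρ1 ▸ div_pos_of_neg_of_neg ht hμD, hρ ▸ div_pos_of_neg_of_neg (by linarith) hμD,
    ?_, ?_, ?_⟩
  · rw [hρ, hρ1, mul_assoc]
    exact neg_two_mul_div_lt_two_mul_div hμD hcond
  · rw [hratio, hxt]
    linear_combination add_mul_neg_div_self (μ := μ) (s := (1 - lam) * a) ht.ne
  · rw [hratio, hρ1]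
    linear_combination mul_neg_div_add_add_one_div_div (μ := μ) ht.ne hDst

/-- Configuration II, non-collinear circling equilibrium: if
a0 < 0, a > 0, (1−λ)a + λa0 < 0 and D = (1−λ)²a² − λ²a0², then x̃ = 1,
ρ1 = λa0/(μD), ρ = −2(1−λ)a/(μD) satisfy ρ1 > 0, ρ > 0, ρ < 2ρ1, and the
equilibrium equations (E1) and (E2). -/
theorem stmt11 (μ lam a a0 D xt ρ ρ1 : ℝ)
    (hμ : μ > 0) (hlam1 : 0 < lam) (hlam2 : lam < 1)
    (ha : a ∈ Set.Icc (-1 : ℝ) 1) (ha0 : a0 ∈ Set.Icc (-1 : ℝ) 1)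
    (ha0neg : a0 < 0) (hapos : a > 0)
    (hcond : (1 - lam) * a + lam * a0 < 0)
    (hD : D = (1 - lam) ^ 2 * a ^ 2 - lam ^ 2 * a0 ^ 2)
    (hxt : xt = 1)
    (hρ1 : ρ1 = lam * a0 / (μ * D))
    (hρ : ρ = -(2 * (1 - lam) * a) / (μ * D)) :
    ρ1 > 0 ∧ ρ > 0 ∧ ρ < 2 * ρ1 ∧
    (1 - lam) * μ * a + lam * μ * a0 * (ρ / (2 * ρ1)) + (1 - xt) / ρ = 0 ∧
    (1 - lam) * μ * a * (ρ / (2 * ρ1)) + lam * μ * a0 + 1 / ρ1 = 0 :=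
  stmt11_general μ lam a a0 D xt ρ ρ1 hμ hlam2 hapos hcond hD hxt hρ1 hρ
end

section
/- Work in ℝ³ with the standard inner product. Let b > 0, set b̂ = (0,0,2b), rb1 = (0,0,−b), rb2 = (0,0,b). Let r1, r2 ∈ ℝ³ with r1 ≠ r2, r1 ≠ rb1, r2 ≠ rb2, and suppose neither r1 − rb1 nor r2 − rb2 is a scalar multiple of b̂. Let x1, x2 ∈ ℝ³ be unit vectors satisfying: ⟨x1, r1 − r2⟩ = 0, ⟨x2, r1 − r2⟩ = 0, ⟨x1, r1 − rb1⟩ = 0, ⟨x2, r2 − rb2⟩ = 0, ⟨x1, b̂⟩ = 0, and ⟨x2, b̂⟩ = 0. Then ⟨x1, x2⟩ = 1 or ⟨x1, x2⟩ = −1. -/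
open RealInnerProductSpace Module

/-!
Both headings are orthogonal to `b̂` and to the baseline `r1 - rb1`: for `x2` this holds because
`r1 - rb1 = (r1 - r2) + (r2 - rb2) + b̂`. The baseline is not parallel to `b̂ ≠ 0`, so these two
vectors span a plane of `ℝ³`; its orthogonal complement is a line, and two unit vectors on a line
are equal or opposite.
-/

section

variable {E : Type*} [NormedAddCommGroup E] [InnerProductSpace ℝ E]

theorem real_inner_eq_one_or_eq_neg_one_of_finrank_eq_one {K : Submodule ℝ E}
    (hK : finrank ℝ K = 1) {x y : E} (hxK : x ∈ K) (hyK : y ∈ K) (hx : ‖x‖ = 1) (hy : ‖y‖ = 1) :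
    ⟪x, y⟫ = 1 ∨ ⟪x, y⟫ = -1 := by
  have hx0 : (⟨x, hxK⟩ : K) ≠ 0 := by
    intro h
    simp only [Submodule.mk_eq_zero] at h
    simp [h] at hx
  obtain ⟨c, hc⟩ := (finrank_eq_one_iff_of_nonzero' _ hx0).1 hK ⟨y, hyK⟩
  have hcy : y = c • x := by simpa [Subtype.ext_iff] using hc.symm
  have hc1 : |c| = 1 := by simpa [hcy, norm_smul, hx] using hy
  rw [hcy, real_inner_smul_right, real_inner_self_eq_norm_sq, hx, one_pow, mul_one]
  exact (abs_eq zero_le_one).1 hc1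

theorem finrank_orthogonal_span_range_fin_two {n : ℕ} [FiniteDimensional ℝ E]
    (hE : finrank ℝ E = n + 2) {f : Fin 2 → E} (hf : LinearIndependent ℝ f) :
    finrank ℝ (Submodule.span ℝ (Set.range f))ᗮ = n :=
  Submodule.finrank_add_finrank_orthogonal' <| by
    rw [finrank_span_eq_card hf, Fintype.card_fin, hE, add_comm]

theorem mem_orthogonal_span_pair {u v z : E} (hzu : ⟪z, u⟫ = 0) (hzv : ⟪z, v⟫ = 0) :
    z ∈ (Submodule.span ℝ (Set.range ![u, v]))ᗮ := by
  rw [← Submodule.span_singleton_le_iff_mem, ← Submodule.isOrtho_iff_le, Submodule.isOrtho_span]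
  simp [Matrix.range_cons, hzu, hzv]

theorem real_inner_eq_one_or_eq_neg_one_of_orthogonal_pair [FiniteDimensional ℝ E]
    (hE : finrank ℝ E = 3) {u v x y : E} (huv : LinearIndependent ℝ ![u, v])
    (hx : ‖x‖ = 1) (hy : ‖y‖ = 1) (hxu : ⟪x, u⟫ = 0) (hxv : ⟪x, v⟫ = 0)
    (hyu : ⟪y, u⟫ = 0) (hyv : ⟪y, v⟫ = 0) :
    ⟪x, y⟫ = 1 ∨ ⟪x, y⟫ = -1 :=
  real_inner_eq_one_or_eq_neg_one_of_finrank_eq_one (finrank_orthogonal_span_range_fin_two hE huv)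
    (mem_orthogonal_span_pair hxu hxv) (mem_orthogonal_span_pair hyu hyv) hx hy

end

theorem stmt12_general (b : ℝ) (hb : b > 0)
    (r1 r2 x1 x2 bhat rb1 rb2 : EuclideanSpace ℝ (Fin 3))
    (hbhat : bhat = (WithLp.equiv 2 (Fin 3 → ℝ)).symm ![0, 0, 2 * b])
    (hrb1 : rb1 = (WithLp.equiv 2 (Fin 3 → ℝ)).symm ![0, 0, -b])
    (hrb2 : rb2 = (WithLp.equiv 2 (Fin 3 → ℝ)).symm ![0, 0, b])
    (hnp1 : ∀ c : ℝ, r1 - rb1 ≠ c • bhat)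
    (hx1 : ‖x1‖ = 1) (hx2 : ‖x2‖ = 1)
    (h2 : ⟪x2, r1 - r2⟫ = 0)
    (h3 : ⟪x1, r1 - rb1⟫ = 0) (h4 : ⟪x2, r2 - rb2⟫ = 0)
    (h5 : ⟪x1, bhat⟫ = 0) (h6 : ⟪x2, bhat⟫ = 0) :
    ⟪x1, x2⟫ = 1 ∨ ⟪x1, x2⟫ = -1 := by
  have hbaseline : r1 - rb1 = (r1 - r2) + (r2 - rb2) + bhat := by
    have hbeacons : bhat = rb2 - rb1 := by
      subst hbhat hrb1 hrb2
      ext i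
      fin_cases i <;> simp [two_mul]
    rw [hbeacons]
    abel
  have h2' : ⟪x2, r1 - rb1⟫ = 0 := by
    rw [hbaseline, inner_add_right, inner_add_right, h2, h4, h6, add_zero, add_zero]
  have hbhat0 : bhat ≠ 0 := fun h => hb.ne' (by simpa [hbhat] using congrArg (· 2) h)
  have hindep : LinearIndependent ℝ ![r1 - rb1, bhat] :=
    linearIndependent_fin2.2 ⟨by simpa using hbhat0, fun c => by simpa using (hnp1 c).symm⟩
  exact real_inner_eq_one_or_eq_neg_one_of_orthogonal_pair finrank_euclideanSpace_fin hindep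
    hx1 hx2 h3 h5 h2' h6

/-- Lemma 5.1 in ℝ³ — if both unit heading vectors are orthogonal
to the inter-agent vector and the beacon axis (and each is orthogonal to its own
beacon baseline), and the baselines are not parallel to the beacon axis, then
the headings satisfy ⟨x1, x2⟩ = ±1. -/
theorem stmt12 (b : ℝ) (hb : b > 0)
    (r1 r2 x1 x2 bhat rb1 rb2 : EuclideanSpace ℝ (Fin 3))
    (hbhat : bhat = (WithLp.equiv 2 (Fin 3 → ℝ)).symm ![0, 0, 2 * b])
    (hrb1 : rb1 = (WithLp.equiv 2 (Fin 3 → ℝ)).symm ![0, 0, -b])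
    (hrb2 : rb2 = (WithLp.equiv 2 (Fin 3 → ℝ)).symm ![0, 0, b])
    (hne : r1 ≠ r2) (hne1 : r1 ≠ rb1) (hne2 : r2 ≠ rb2)
    (hnp1 : ∀ c : ℝ, r1 - rb1 ≠ c • bhat)
    (hnp2 : ∀ c : ℝ, r2 - rb2 ≠ c • bhat)
    (hx1 : ‖x1‖ = 1) (hx2 : ‖x2‖ = 1)
    (h1 : ⟪x1, r1 - r2⟫ = 0) (h2 : ⟪x2, r1 - r2⟫ = 0)
    (h3 : ⟪x1, r1 - rb1⟫ = 0) (h4 : ⟪x2, r2 - rb2⟫ = 0)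
    (h5 : ⟪x1, bhat⟫ = 0) (h6 : ⟪x2, bhat⟫ = 0) :
    ⟪x1, x2⟫ = 1 ∨ ⟪x1, x2⟫ = -1 :=
  stmt12_general b hb r1 r2 x1 x2 bhat rb1 rb2 hbhat hrb1 hrb2 hnp1 hx1 hx2 h2 h3 h4 h5 h6
end

section
/- Let μ > 0, λ ∈ (0,1), and a ∈ [−1,1]. There exist ρ > 0, ρ1 > 0, ρ2 > 0, real numbers r̂1, r̂2, and x̃ ∈ {−1, 1} satisfying the system (1−λ)μa + (1−x̃)/ρ = 0, (1−λ)μa·(ρ1² + ρ² − ρ2² − 2r̂2)/(2ρρ1) + 1/ρ1 = 0, (1−λ)μa·(ρ2² + ρ² − ρ1² + 2r̂1)/(2ρρ2) + 1/ρ2 = 0, and ((1−λ)μa/ρ)·(r̂1 − r̂2) = 0, if and only if a < 0. Moreover, every such solution satisfies x̃ = −1, r̂1 = r̂2, ρ = 2/((1−λ)μ(−a)), and ρ1² − ρ2² − 2r̂1 = 0. -/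
/-!
The system involves `λ`, `μ`, `a` only through the gain `c = (1 - λ) μ a`, which has the sign
of `a`. If `x̃ = 1` the first equation forces `c = 0`, and then the second one reads
`1 / ρ1 = 0`; so `x̃ = -1` and the first equation becomes `c ρ = -2`, whence `c < 0`. Since `c ≠ 0`,
the last equation gives `r̂1 = r̂2`, and substituting `c ρ = -2` into the second equation leaves
`c (ρ1² - ρ2² - 2 r̂2) = 0`. Conversely, for `c < 0` the point `ρ = -2 / c`, `ρ1 = ρ2 = 1`,
`r̂1 = r̂2 = 0`, `x̃ = -1` solves the system.
-/

def IsCirclingEquilibrium (c ρ ρ1 ρ2 rh1 rh2 xt : ℝ) : Prop :=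
  ρ > 0 ∧ ρ1 > 0 ∧ ρ2 > 0 ∧ (xt = -1 ∨ xt = 1) ∧
    c + (1 - xt) / ρ = 0 ∧
    c * ((ρ1 ^ 2 + ρ ^ 2 - ρ2 ^ 2 - 2 * rh2) / (2 * ρ * ρ1)) + 1 / ρ1 = 0 ∧
    c * ((ρ2 ^ 2 + ρ ^ 2 - ρ1 ^ 2 + 2 * rh1) / (2 * ρ * ρ2)) + 1 / ρ2 = 0 ∧
    (c / ρ) * (rh1 - rh2) = 0

namespace IsCirclingEquilibrium

variable {c ρ ρ1 ρ2 rh1 rh2 xt : ℝ}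

lemma xt_eq_neg_one (h : IsCirclingEquilibrium c ρ ρ1 ρ2 rh1 rh2 xt) : xt = -1 := by
  obtain ⟨-, hρ1, -, hxt | rfl, e1, e2, -⟩ := h
  · exact hxt
  · have hc : c = 0 := by simpa using e1
    simp only [hc, zero_mul, zero_add, one_div, inv_eq_zero] at e2
    exact absurd e2 hρ1.ne'

lemma mul_rho_eq_neg_two (h : IsCirclingEquilibrium c ρ ρ1 ρ2 rh1 rh2 xt) : c * ρ = -2 := by
  have hxt := h.xt_eq_neg_one
  obtain ⟨hρ, -, -, -, e1, -⟩ := h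
  rw [hxt] at e1
  field_simp at e1
  linarith

lemma gain_neg (h : IsCirclingEquilibrium c ρ ρ1 ρ2 rh1 rh2 xt) : c < 0 := by
  have hcρ := h.mul_rho_eq_neg_two
  nlinarith [h.1]

lemma rho_eq (h : IsCirclingEquilibrium c ρ ρ1 ρ2 rh1 rh2 xt) : ρ = 2 / -c := by
  rw [eq_div_iff (neg_ne_zero.mpr h.gain_neg.ne)]
  linarith [h.mul_rho_eq_neg_two]

lemma rh1_eq_rh2 (h : IsCirclingEquilibrium c ρ ρ1 ρ2 rh1 rh2 xt) : rh1 = rh2 := by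
  have hc := h.gain_neg.ne
  obtain ⟨hρ, -, -, -, -, -, -, e4⟩ := h
  simpa [hc, hρ.ne', sub_eq_zero] using e4

lemma sq_sub_sq_sub_two_mul_eq_zero (h : IsCirclingEquilibrium c ρ ρ1 ρ2 rh1 rh2 xt) :
    ρ1 ^ 2 - ρ2 ^ 2 - 2 * rh1 = 0 := by
  have hc := h.gain_neg.ne
  have hcρ := h.mul_rho_eq_neg_two
  have hrh := h.rh1_eq_rh2
  obtain ⟨hρ, hρ1, -, -, -, e2, -⟩ := h
  field_simp at e2
  have : c * (ρ1 ^ 2 - ρ2 ^ 2 - 2 * rh1) = 0 := by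
    rw [hrh]
    linear_combination e2 - ρ * hcρ
  simpa [hc] using this

lemma of_gain_neg (hc : c < 0) : IsCirclingEquilibrium c (-2 / c) 1 1 0 0 (-1) := by
  refine ⟨div_pos_of_neg_of_neg (by norm_num) hc, one_pos, one_pos, Or.inl rfl, ?_, ?_, ?_, ?_⟩ <;>
    field_simp [hc.ne] <;> ring

lemma exists_iff_gain_neg :
    (∃ ρ ρ1 ρ2 rh1 rh2 xt : ℝ, IsCirclingEquilibrium c ρ ρ1 ρ2 rh1 rh2 xt) ↔ c < 0 :=
  ⟨fun ⟨_, _, _, _, _, _, h⟩ => h.gain_neg, fun hc => ⟨_, _, _, _, _, _, of_gain_neg hc⟩⟩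

end IsCirclingEquilibrium

theorem stmt13_general (μ lam a : ℝ) (hμ : μ > 0) (hlam2 : lam < 1) :
    ((∃ ρ ρ1 ρ2 rh1 rh2 xt : ℝ, ρ > 0 ∧ ρ1 > 0 ∧ ρ2 > 0 ∧
        (xt = -1 ∨ xt = 1) ∧
        (1 - lam) * μ * a + (1 - xt) / ρ = 0 ∧
        (1 - lam) * μ * a * ((ρ1 ^ 2 + ρ ^ 2 - ρ2 ^ 2 - 2 * rh2) / (2 * ρ * ρ1))
          + 1 / ρ1 = 0 ∧
        (1 - lam) * μ * a * ((ρ2 ^ 2 + ρ ^ 2 - ρ1 ^ 2 + 2 * rh1) / (2 * ρ * ρ2))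
          + 1 / ρ2 = 0 ∧
        ((1 - lam) * μ * a / ρ) * (rh1 - rh2) = 0) ↔
      a < 0) ∧
    (∀ ρ ρ1 ρ2 rh1 rh2 xt : ℝ, ρ > 0 → ρ1 > 0 → ρ2 > 0 →
      (xt = -1 ∨ xt = 1) →
      (1 - lam) * μ * a + (1 - xt) / ρ = 0 →
      (1 - lam) * μ * a * ((ρ1 ^ 2 + ρ ^ 2 - ρ2 ^ 2 - 2 * rh2) / (2 * ρ * ρ1))
        + 1 / ρ1 = 0 →
      (1 - lam) * μ * a * ((ρ2 ^ 2 + ρ ^ 2 - ρ1 ^ 2 + 2 * rh1) / (2 * ρ * ρ2))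
        + 1 / ρ2 = 0 →
      ((1 - lam) * μ * a / ρ) * (rh1 - rh2) = 0 →
      xt = -1 ∧ rh1 = rh2 ∧ ρ = 2 / ((1 - lam) * μ * (-a)) ∧
        ρ1 ^ 2 - ρ2 ^ 2 - 2 * rh1 = 0) := by
  have hsign : (1 - lam) * μ * a < 0 ↔ a < 0 :=
    by simpa using mul_lt_mul_iff_right₀ (b := a) (c := 0) (mul_pos (by linarith) hμ)
  refine ⟨IsCirclingEquilibrium.exists_iff_gain_neg.trans hsign, ?_⟩
  intro ρ ρ1 ρ2 rh1 rh2 xt hρ hρ1 hρ2 hxt e1 e2 e3 e4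
  have h : IsCirclingEquilibrium ((1 - lam) * μ * a) ρ ρ1 ρ2 rh1 rh2 xt :=
    ⟨hρ, hρ1, hρ2, hxt, e1, e2, e3, e4⟩
  rw [mul_neg]
  exact ⟨h.xt_eq_neg_one, h.rh1_eq_rh2, h.rho_eq, h.sq_sub_sq_sub_two_mul_eq_zero⟩

/-- Configuration III with a0 = 0: the reduced equilibrium system
has a solution (ρ, ρ1, ρ2, r̂1, r̂2, x̃) with ρ, ρ1, ρ2 > 0 and x̃ ∈ {−1,1} iff
a < 0; moreover every solution has x̃ = −1, r̂1 = r̂2, ρ = 2/((1−λ)μ(−a)), and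
ρ1² − ρ2² − 2r̂1 = 0. -/
theorem stmt13 (μ lam a : ℝ) (hμ : μ > 0) (hlam1 : 0 < lam) (hlam2 : lam < 1)
    (ha : a ∈ Set.Icc (-1 : ℝ) 1) :
    ((∃ ρ ρ1 ρ2 rh1 rh2 xt : ℝ, ρ > 0 ∧ ρ1 > 0 ∧ ρ2 > 0 ∧
        (xt = -1 ∨ xt = 1) ∧
        (1 - lam) * μ * a + (1 - xt) / ρ = 0 ∧
        (1 - lam) * μ * a * ((ρ1 ^ 2 + ρ ^ 2 - ρ2 ^ 2 - 2 * rh2) / (2 * ρ * ρ1))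
          + 1 / ρ1 = 0 ∧
        (1 - lam) * μ * a * ((ρ2 ^ 2 + ρ ^ 2 - ρ1 ^ 2 + 2 * rh1) / (2 * ρ * ρ2))
          + 1 / ρ2 = 0 ∧
        ((1 - lam) * μ * a / ρ) * (rh1 - rh2) = 0) ↔
      a < 0) ∧
    (∀ ρ ρ1 ρ2 rh1 rh2 xt : ℝ, ρ > 0 → ρ1 > 0 → ρ2 > 0 →
      (xt = -1 ∨ xt = 1) →
      (1 - lam) * μ * a + (1 - xt) / ρ = 0 →
      (1 - lam) * μ * a * ((ρ1 ^ 2 + ρ ^ 2 - ρ2 ^ 2 - 2 * rh2) / (2 * ρ * ρ1))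
        + 1 / ρ1 = 0 →
      (1 - lam) * μ * a * ((ρ2 ^ 2 + ρ ^ 2 - ρ1 ^ 2 + 2 * rh1) / (2 * ρ * ρ2))
        + 1 / ρ2 = 0 →
      ((1 - lam) * μ * a / ρ) * (rh1 - rh2) = 0 →
      xt = -1 ∧ rh1 = rh2 ∧ ρ = 2 / ((1 - lam) * μ * (-a)) ∧
        ρ1 ^ 2 - ρ2 ^ 2 - 2 * rh1 = 0) :=
  stmt13_general μ lam a hμ hlam2
end

section
/- Let μ > 0, λ ∈ (0,1), let a be real and a0 a nonzero real, let ρ > 0, ρ1 > 0, ρ2 > 0, and let r̂1, r̂2 be real. If (λμa0/(2ρ))·[(ρ1² + ρ² − ρ2² − 2r̂2)/ρ1 + (ρ1² − ρ² − ρ2² − 2r̂1)/ρ2] = 0 and ((1−λ)μa/(2ρ))·[(ρ1² + ρ² − ρ2² − 2r̂2)/ρ1 + (ρ1² − ρ² − ρ2² − 2r̂1)/ρ2] + (1/ρ1 − 1/ρ2) = 0, then ρ1 = ρ2 and r̂2 = −r̂1. -/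
theorem eq_neg_of_div_add_div_sq_sub_sq_eq_zero {ρ r rh1 rh2 : ℝ} (hr : r ≠ 0)
    (h : (r ^ 2 + ρ ^ 2 - r ^ 2 - 2 * rh2) / r + (r ^ 2 - ρ ^ 2 - r ^ 2 - 2 * rh1) / r = 0) :
    rh2 = -rh1 := by
  rw [← add_div, div_eq_zero_iff, or_iff_left hr] at h
  linarith

theorem stmt14_general (μ lam a a0 ρ ρ1 ρ2 rh1 rh2 : ℝ)
    (hμ : μ > 0) (hlam1 : 0 < lam) (ha0 : a0 ≠ 0)
    (hρ : ρ > 0) (h1 : ρ1 > 0)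
    (e1 : (lam * μ * a0 / (2 * ρ)) *
        ((ρ1 ^ 2 + ρ ^ 2 - ρ2 ^ 2 - 2 * rh2) / ρ1
          + (ρ1 ^ 2 - ρ ^ 2 - ρ2 ^ 2 - 2 * rh1) / ρ2) = 0)
    (e2 : ((1 - lam) * μ * a / (2 * ρ)) *
        ((ρ1 ^ 2 + ρ ^ 2 - ρ2 ^ 2 - 2 * rh2) / ρ1
          + (ρ1 ^ 2 - ρ ^ 2 - ρ2 ^ 2 - 2 * rh1) / ρ2)
        + (1 / ρ1 - 1 / ρ2) = 0) :
    ρ1 = ρ2 ∧ rh2 = -rh1 := by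
  have hbracket := (mul_eq_zero.mp e1).resolve_left (by positivity)
  have hρ12 : ρ1 = ρ2 := by
    rwa [hbracket, mul_zero, zero_add, sub_eq_zero, one_div, one_div, inv_inj] at e2
  subst hρ12
  exact ⟨rfl, eq_neg_of_div_add_div_sq_sub_sq_eq_zero h1.ne' hbracket⟩

/-- Configuration III with a0 ≠ 0: vanishing of the two difference
expressions forces ρ1 = ρ2 and r̂2 = −r̂1. -/
theorem stmt14 (μ lam a a0 ρ ρ1 ρ2 rh1 rh2 : ℝ)
    (hμ : μ > 0) (hlam1 : 0 < lam) (hlam2 : lam < 1) (ha0 : a0 ≠ 0)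
    (hρ : ρ > 0) (h1 : ρ1 > 0) (h2 : ρ2 > 0)
    (e1 : (lam * μ * a0 / (2 * ρ)) *
        ((ρ1 ^ 2 + ρ ^ 2 - ρ2 ^ 2 - 2 * rh2) / ρ1
          + (ρ1 ^ 2 - ρ ^ 2 - ρ2 ^ 2 - 2 * rh1) / ρ2) = 0)
    (e2 : ((1 - lam) * μ * a / (2 * ρ)) *
        ((ρ1 ^ 2 + ρ ^ 2 - ρ2 ^ 2 - 2 * rh2) / ρ1
          + (ρ1 ^ 2 - ρ ^ 2 - ρ2 ^ 2 - 2 * rh1) / ρ2)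
        + (1 / ρ1 - 1 / ρ2) = 0) :
    ρ1 = ρ2 ∧ rh2 = -rh1 :=
  stmt14_general μ lam a a0 ρ ρ1 ρ2 rh1 rh2 hμ hlam1 ha0 hρ h1 e1 e2
end

section
/- Let ã, ã0 be real numbers with ã0 ≠ 0, let b > 0, let ρ+ > 0 and ρ− be real with ρ+² ≠ ρ−², and let r̂1 be real. If (ã0 + ã)(ρ+² + ρ+ρ− + r̂1) + 2ρ+ = 0, (ã0 − ã)(ρ−² + ρ+ρ− + r̂1) − 2ρ− = 0, and (ã0 + ã)·r̂1·ρ+ + (ã0 − ã)·r̂1·ρ− + 2ã0·b²·(ρ+ + ρ−) = 0, then r̂1 = −ρ+ρ− − b². -/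
/-!
Write `A = ã0 + ã`, `B = ã0 - ã`, `σ = ρ+ + ρ-`, so that `2 ã0 = A + B` and the first two equations
read `A (ρ+ σ + r̂1) = -2 ρ+`, `B (ρ- σ + r̂1) = 2 ρ-`. Multiplying the third equation by
`(ρ+ σ + r̂1)(ρ- σ + r̂1)` eliminates `A` and `B` and leaves
`r̂1 (r̂1 + ρ+ ρ- + b²)(ρ+² - ρ-²) = 0`. The root `r̂1 = 0` is excluded because the third equation
would then force `σ = 0`, i.e. `ρ+² = ρ-²`.
-/

section

variable {R : Type*} [CommRing R] {ta ta0 b p m r : R}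

theorem configIII_equilibrium_factor_eq_zero
    (e1 : (ta0 + ta) * (p ^ 2 + p * m + r) + 2 * p = 0)
    (e2 : (ta0 - ta) * (m ^ 2 + p * m + r) - 2 * m = 0)
    (e3 : (ta0 + ta) * r * p + (ta0 - ta) * r * m + 2 * ta0 * b ^ 2 * (p + m) = 0) :
    2 * (r * (r + p * m + b ^ 2) * (p ^ 2 - m ^ 2)) = 0 := by
  linear_combination (m ^ 2 + p * m + r) * (r * p + b ^ 2 * (p + m)) * e1
    + (p ^ 2 + p * m + r) * (r * m + b ^ 2 * (p + m)) * e2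
    - (p ^ 2 + p * m + r) * (m ^ 2 + p * m + r) * e3

theorem configIII_equilibrium_ne_zero [IsDomain R] [NeZero (2 : R)]
    (ha0 : ta0 ≠ 0) (hb : b ≠ 0) (hne : p ^ 2 ≠ m ^ 2)
    (e3 : (ta0 + ta) * r * p + (ta0 - ta) * r * m + 2 * ta0 * b ^ 2 * (p + m) = 0) :
    r ≠ 0 := by
  rintro rfl
  have hsum : p + m = 0 := by
    have : 2 * ta0 * b ^ 2 * (p + m) = 0 := by linear_combination e3
    simpa [two_ne_zero, ha0, hb] using this
  exact hne (by linear_combination (p - m) * hsum)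

end

theorem stmt15_general (ta ta0 b ρp ρm rh1 : ℝ)
    (ha0 : ta0 ≠ 0) (hb : b > 0) (hne : ρp ^ 2 ≠ ρm ^ 2)
    (e1 : (ta0 + ta) * (ρp ^ 2 + ρp * ρm + rh1) + 2 * ρp = 0)
    (e2 : (ta0 - ta) * (ρm ^ 2 + ρp * ρm + rh1) - 2 * ρm = 0)
    (e3 : (ta0 + ta) * rh1 * ρp + (ta0 - ta) * rh1 * ρm
        + 2 * ta0 * b ^ 2 * (ρp + ρm) = 0) :
    rh1 = -(ρp * ρm) - b ^ 2 := by
  have hfactor := configIII_equilibrium_factor_eq_zero e1 e2 e3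
  have hrh1 := configIII_equilibrium_ne_zero ha0 hb.ne' hne e3
  have hdiff : ρp ^ 2 - ρm ^ 2 ≠ 0 := sub_ne_zero.mpr hne
  have hroot : rh1 + ρp * ρm + b ^ 2 = 0 := by
    simpa [two_ne_zero, hrh1, hdiff] using hfactor
  linear_combination hroot

/-- Configuration III, x̃ = −1 analysis: the three equilibrium
equations in the variables ρ+, ρ−, r̂1 force r̂1 = −ρ+ρ− − b². -/
theorem stmt15 (ta ta0 b ρp ρm rh1 : ℝ)
    (ha0 : ta0 ≠ 0) (hb : b > 0) (hρp : ρp > 0) (hne : ρp ^ 2 ≠ ρm ^ 2)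
    (e1 : (ta0 + ta) * (ρp ^ 2 + ρp * ρm + rh1) + 2 * ρp = 0)
    (e2 : (ta0 - ta) * (ρm ^ 2 + ρp * ρm + rh1) - 2 * ρm = 0)
    (e3 : (ta0 + ta) * rh1 * ρp + (ta0 - ta) * rh1 * ρm
        + 2 * ta0 * b ^ 2 * (ρp + ρm) = 0) :
    rh1 = -(ρp * ρm) - b ^ 2 :=
  stmt15_general ta ta0 b ρp ρm rh1 ha0 hb hne e1 e2 e3
end

section
/- Let μ > 0, λ ∈ (0,1), and a, a0 ∈ [−1,1] with a0 < 0, a < 0, (1−λ)²a² − λ²a0² < 0, and Φ < b, where Φ = (1−λ)a/(μ((1−λ)²a² − λ²a0²)). Then the values x̃ = 1, r̂1 = 2b(−b + Φ), ρ = 2(b − Φ), and ρ1 = (λa0/((1−λ)a))·Φ satisfy ρ > 0, ρ1 > 0, |(ρ² + 2r̂1)/(2ρρ1)| < 1, and the Configuration-III equilibrium equations (S1) (1−λ)μa + λμa0·(ρ² + 2r̂1)/(2ρρ1) + (1 − x̃)/ρ = 0, (S2) (1−λ)μa·(ρ² + 2r̂1)/(2ρρ1) + 1/ρ1 + λμa0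 = 0, and (S3) μ·(2(1−λ)a/ρ + λa0/ρ1)·r̂1 + 2λμa0·b²/ρ1 = 0. -/
/-- Configuration III, x̃ = 1 stacked circling equilibrium
(Proposition 5.3(a)): with a0 < 0, a < 0, (1−λ)²a² − λ²a0² < 0 and Φ < b, the
displayed values satisfy positivity, the strict dot-product constraint, and the
equilibrium equations (S1)–(S3). -/
theorem stmt16 (μ lam a a0 b Φ xt rh1 ρ ρ1 : ℝ)
    (hμ : μ > 0) (hlam1 : 0 < lam) (hlam2 : lam < 1)
    (ha : a ∈ Set.Icc (-1 : ℝ) 1) (ha0 : a0 ∈ Set.Icc (-1 : ℝ) 1)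
    (hb : b > 0)
    (ha0neg : a0 < 0) (haneg : a < 0)
    (hD : (1 - lam) ^ 2 * a ^ 2 - lam ^ 2 * a0 ^ 2 < 0)
    (hΦ : Φ = (1 - lam) * a / (μ * ((1 - lam) ^ 2 * a ^ 2 - lam ^ 2 * a0 ^ 2)))
    (hΦb : Φ < b)
    (hxt : xt = 1)
    (hrh1 : rh1 = 2 * b * (-b + Φ))
    (hρ : ρ = 2 * (b - Φ))
    (hρ1 : ρ1 = (lam * a0 / ((1 - lam) * a)) * Φ) :
    ρ > 0 ∧ ρ1 > 0 ∧ |(ρ ^ 2 + 2 * rh1) / (2 * ρ * ρ1)| < 1 ∧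
    (1 - lam) * μ * a + lam * μ * a0 * ((ρ ^ 2 + 2 * rh1) / (2 * ρ * ρ1))
      + (1 - xt) / ρ = 0 ∧
    (1 - lam) * μ * a * ((ρ ^ 2 + 2 * rh1) / (2 * ρ * ρ1)) + 1 / ρ1
      + lam * μ * a0 = 0 ∧
    μ * (2 * (1 - lam) * a / ρ + lam * a0 / ρ1) * rh1
      + 2 * lam * μ * a0 * b ^ 2 / ρ1 = 0 := by
  have hA : (1 - lam) * a < 0 := mul_neg_of_pos_of_neg (by linarith) haneg
  have hB : lam * a0 < 0 := mul_neg_of_pos_of_neg hlam1 ha0neg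
  have hμD : μ * ((1 - lam) ^ 2 * a ^ 2 - lam ^ 2 * a0 ^ 2) < 0 :=
    mul_neg_of_pos_of_neg hμ hD
  have hΦpos : Φ > 0 := by
    rw [hΦ]; exact div_pos_of_neg_of_neg hA hμD
  have hρpos : ρ > 0 := by rw [hρ]; linarith
  have hρ1pos : ρ1 > 0 := by
    rw [hρ1]
    exact mul_pos (div_pos_of_neg_of_neg hB hA) hΦpos
  have hAne : (1 - lam) * a ≠ 0 := ne_of_lt hA
  have hBne : lam * a0 ≠ 0 := ne_of_lt hB
  have hρne : ρ ≠ 0 := ne_of_gt hρpos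
  have hρ1ne : ρ1 ≠ 0 := ne_of_gt hρ1pos
  have hΦne : Φ ≠ 0 := ne_of_gt hΦpos
  have hμDne : μ * ((1 - lam) ^ 2 * a ^ 2 - lam ^ 2 * a0 ^ 2) ≠ 0 := ne_of_lt hμD
  have hane : a ≠ 0 := ne_of_lt haneg
  have ha0ne : a0 ≠ 0 := ne_of_lt ha0neg
  have hlamne : lam ≠ 0 := ne_of_gt hlam1
  have h1lamne : 1 - lam ≠ 0 := by linarith
  have hμne : μ ≠ 0 := ne_of_gt hμ
  have hDne : (1 - lam) ^ 2 * a ^ 2 - lam ^ 2 * a0 ^ 2 ≠ 0 := ne_of_lt hD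
  -- key algebraic relation: Φ * (μ * D) = (1-lam) * a
  have hΦD : Φ * (μ * ((1 - lam) ^ 2 * a ^ 2 - lam ^ 2 * a0 ^ 2)) = (1 - lam) * a := by
    rw [hΦ]; field_simp
  -- key: ρ1 * ((1-lam)*a) = (lam*a0) * Φ
  have hρ1A : ρ1 * ((1 - lam) * a) = lam * a0 * Φ := by
    rw [hρ1]; field_simp
  -- the ratio equals -(1-lam)*a/(lam*a0)
  have hnum : ρ ^ 2 + 2 * rh1 = -2 * Φ * ρ := by rw [hρ, hrh1]; ring
  have hratio : (ρ ^ 2 + 2 * rh1) / (2 * ρ * ρ1) = -((1 - lam) * a) / (lam * a0) := by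
    rw [hnum, div_eq_div_iff (mul_ne_zero (mul_ne_zero two_ne_zero hρne) hρ1ne) hBne]
    linear_combination 2 * ρ * hρ1A
  refine ⟨hρpos, hρ1pos, ?_, ?_, ?_, ?_⟩
  · rw [hratio, abs_div, div_lt_one (abs_pos.mpr hBne)]
    nlinarith [abs_nonneg (-((1 - lam) * a)), abs_nonneg (lam * a0),
      sq_abs (-((1 - lam) * a)), sq_abs (lam * a0)]
  · rw [hratio, hxt]
    field_simp
    ring_nf
  · rw [hratio]
    have hS2 : μ * ρ1 * ((lam * a0) ^ 2 - ((1 - lam) * a) ^ 2) + lam * a0 = 0 := by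
      have h : ((1 - lam) * a) *
          (μ * ρ1 * ((lam * a0) ^ 2 - ((1 - lam) * a) ^ 2) + lam * a0) = 0 := by
        linear_combination μ * ((lam * a0) ^ 2 - ((1 - lam) * a) ^ 2) * hρ1A
          - (lam * a0) * hΦD
      rcases mul_eq_zero.mp h with h' | h'
      · exact absurd h' hAne
      · exact h'
    field_simp
    linear_combination hS2
  · have hrh : rh1 = -b * ρ := by rw [hrh1, hρ]; ring
    have h2b : 2 * b ^ 2 - b * ρ = 2 * b * Φ := by rw [hρ]; ring
    rw [hrh]
    field_simp
    linear_combination (-2 * μ * b) * hρ1A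
      + (-μ * b * lam * a0) * hρ
end

section
/- Let μ > 0, λ ∈ (0,1), and a, a0 ∈ [−1,1] with a0 < 0 and (1−λ)a = λa0. Then the values x̃ = −1, r̂1 = −b², ρ = (1/(−2λμa0))·(1 + √(1 + (2λμa0·b)²)), and ρ1 = ρ/2 satisfy ρ > 0, ρ1 > 0, |(ρ² + 2r̂1)/(2ρρ1)| < 1, and the Configuration-III equilibrium equations (S1) (1−λ)μa + λμa0·(ρ² + 2r̂1)/(2ρρ1) + (1 − x̃)/ρ = 0, (S2) (1−λ)μa·(ρ² + 2r̂1)/(2ρρ1) + 1/ρ1 + λμa0 = 0, and (S3) μ·(2(1−λ)a/ρ + λa0/ρ1)·r̂1 + 2λμa0·b²/ρ1 = 0. -/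
/-!
With `k = 2λμa₀ < 0`, the proposed `ρ` is the positive root of `k ρ² + 2ρ = k b²`, and the
balance `(1 − λ)a = λa₀` makes both attention-weighted gains equal to `k / 2`. After substituting
`x̃ = −1`, `r̂₁ = −b²`, `ρ₁ = ρ / 2`, each of (S1)–(S3) becomes a multiple of that quadratic (or
of the balance), and the dot product `(ρ² − 2b²)/ρ²` lies in `(−1, 1)` because `0 < b² < ρ²`.
-/

lemma pos_root_pos {k b ρ : ℝ} (hk : k < 0) (hρ : ρ = 1 / -k * (1 + √(1 + (k * b) ^ 2))) :
    0 < ρ := by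
  have : 0 < -k := neg_pos.mpr hk
  rw [hρ]
  positivity

lemma pos_root_quadratic {k b ρ : ℝ} (hk : k ≠ 0)
    (hρ : ρ = 1 / -k * (1 + √(1 + (k * b) ^ 2))) : k * ρ ^ 2 + 2 * ρ = k * b ^ 2 := by
  have hs : √(1 + (k * b) ^ 2) ^ 2 = 1 + (k * b) ^ 2 := Real.sq_sqrt (by positivity)
  subst hρ
  rw [mul_pow] at hs ⊢
  field_simp
  linear_combination hs

lemma sq_lt_sq_of_quadratic {k b ρ : ℝ} (hk : k < 0) (hρ : 0 < ρ)
    (hquad : k * ρ ^ 2 + 2 * ρ = k * b ^ 2) : b ^ 2 < ρ ^ 2 := by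
  nlinarith

lemma abs_sub_two_mul_div_lt_one {x y : ℝ} (hx : 0 < x) (hxy : x < y) :
    |(y - 2 * x) / y| < 1 := by
  have hy : 0 < y := hx.trans hxy
  rw [abs_lt, lt_div_iff₀ hy, div_lt_iff₀ hy]
  constructor <;> linarith

theorem stmt18_general (μ lam a a0 b xt rh1 ρ ρ1 : ℝ)
    (hμ : μ > 0) (hlam1 : 0 < lam)
    (hb : b > 0)
    (ha0neg : a0 < 0) (heq : (1 - lam) * a = lam * a0)
    (hxt : xt = -1)
    (hrh1 : rh1 = -b ^ 2)
    (hρ : ρ = (1 / (-(2 * lam * μ * a0))) * (1 + Real.sqrt (1 + (2 * lam * μ * a0 * b) ^ 2)))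
    (hρ1 : ρ1 = ρ / 2) :
    ρ > 0 ∧ ρ1 > 0 ∧ |(ρ ^ 2 + 2 * rh1) / (2 * ρ * ρ1)| < 1 ∧
    (1 - lam) * μ * a + lam * μ * a0 * ((ρ ^ 2 + 2 * rh1) / (2 * ρ * ρ1))
      + (1 - xt) / ρ = 0 ∧
    (1 - lam) * μ * a * ((ρ ^ 2 + 2 * rh1) / (2 * ρ * ρ1)) + 1 / ρ1
      + lam * μ * a0 = 0 ∧
    μ * (2 * (1 - lam) * a / ρ + lam * a0 / ρ1) * rh1
      + 2 * lam * μ * a0 * b ^ 2 / ρ1 = 0 := by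
  subst hxt hrh1 hρ1
  have hk : 2 * lam * μ * a0 < 0 := mul_neg_of_pos_of_neg (by positivity) ha0neg
  have hρpos : 0 < ρ := pos_root_pos hk hρ
  have hquad : 2 * lam * μ * a0 * ρ ^ 2 + 2 * ρ = 2 * lam * μ * a0 * b ^ 2 :=
    pos_root_quadratic hk.ne hρ
  have hgain : (1 - lam) * μ * a = lam * μ * a0 := by linear_combination μ * heq
  have hdot : (ρ ^ 2 + 2 * -b ^ 2) / (2 * ρ * (ρ / 2)) = (ρ ^ 2 - 2 * b ^ 2) / ρ ^ 2 := by
    field_simp; ring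
  refine ⟨hρpos, half_pos hρpos, ?_, ?_, ?_, ?_⟩
  · rw [hdot]
    exact abs_sub_two_mul_div_lt_one (by positivity) (sq_lt_sq_of_quadratic hk hρpos hquad)
  · rw [hdot, hgain]
    field_simp
    linear_combination hquad
  · rw [hdot, hgain]
    field_simp
    linear_combination hquad
  · field_simp
    linear_combination (-2 * μ * b ^ 2) * heq

/-- Configuration III, x̃ = −1 symmetric circling equilibrium
(Proposition 5.3(c)): with a0 < 0 and (1−λ)a = λa0, the displayed values satisfy
positivity, the strict dot-product constraint, and equations (S1)–(S3). -/
theorem stmt18 (μ lam a a0 b xt rh1 ρ ρ1 : ℝ)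
    (hμ : μ > 0) (hlam1 : 0 < lam) (hlam2 : lam < 1)
    (ha : a ∈ Set.Icc (-1 : ℝ) 1) (ha0 : a0 ∈ Set.Icc (-1 : ℝ) 1)
    (hb : b > 0)
    (ha0neg : a0 < 0) (heq : (1 - lam) * a = lam * a0)
    (hxt : xt = -1)
    (hrh1 : rh1 = -b ^ 2)
    (hρ : ρ = (1 / (-(2 * lam * μ * a0))) * (1 + Real.sqrt (1 + (2 * lam * μ * a0 * b) ^ 2)))
    (hρ1 : ρ1 = ρ / 2) :
    ρ > 0 ∧ ρ1 > 0 ∧ |(ρ ^ 2 + 2 * rh1) / (2 * ρ * ρ1)| < 1 ∧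
    (1 - lam) * μ * a + lam * μ * a0 * ((ρ ^ 2 + 2 * rh1) / (2 * ρ * ρ1))
      + (1 - xt) / ρ = 0 ∧
    (1 - lam) * μ * a * ((ρ ^ 2 + 2 * rh1) / (2 * ρ * ρ1)) + 1 / ρ1
      + lam * μ * a0 = 0 ∧
    μ * (2 * (1 - lam) * a / ρ + lam * a0 / ρ1) * rh1
      + 2 * lam * μ * a0 * b ^ 2 / ρ1 = 0 :=
  stmt18_general μ lam a a0 b xt rh1 ρ ρ1 hμ hlam1 hb ha0neg heq hxt hrh1 hρ hρ1
end

section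
/- Let μ > 0, λ ∈ (0,1), and a, a0 ∈ [−1,1] with a0 ≠ 0, (1−λ)a + λa0 < 0, and (1−λ)a − λa0 ≠ 0. Define ρ+ = (1 + √(1 + (μ((1−λ)a + λa0)·b)²))/(−μ((1−λ)a + λa0)) and ρ− = (1 − √(1 + (μ(λa0 − (1−λ)a)·b)²))/(μ(λa0 − (1−λ)a)). Then the values x̃ = −1, r̂1 = −ρ+ρ− − b², ρ = ρ+ + ρ−, and ρ1 = (ρ+ − ρ−)/2 satisfy ρ+ > b > |ρ−|, ρ > 0, ρ1 > 0, |(ρ² + 2r̂1)/(2ρρ1)| < 1, and the Configuration-III equilibrium equations (S1) (1−λ)μa + λμa0·(ρ² + 2r̂1)/(2ρρ1) + (1 − x̃)/ρ = 0, (S2) (1−λ)μa·(ρ² + 2r̂1)/(2ρρ1) + 1/ρ1 + λμa0 = 0, and (S3) μ·(2(1−λ)a/ρ + λa0/ρ1)·r̂1 + 2λμa0·b²/ρ1 = 0. -/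
/-!
Write `α = (1-λ)μa`, `β = λμa0`. In the variables `ρ+ = ρ/2 + ρ1`, `ρ- = ρ/2 - ρ1` the cosine
`(ρ² + 2r̂1)/(2ρρ1)` becomes `(ρ+² + ρ-² - 2b²)/(ρ+² - ρ-²)`, and the sum and difference of (S1) and
(S2) decouple into the quadratics `(α+β) ρ+² + 2ρ+ - (α+β) b² = 0` and
`(β-α) ρ-² - 2ρ- - (β-α) b² = 0`, of which the displayed `ρ±` are roots; (S3) is a combination of
the two. Both quadratics have the form `k x² - 2x - k b² = 0`, i.e. `k (x² - b²) = 2x`, which puts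
the root with `k, x > 0` above `b` and the root with `k x < 0` strictly inside `(-b, b)`: this is
`ρ+ > b > |ρ-|`, and it makes the cosine lie strictly between `-1` and `1`.
-/

theorem quadratic_eq_zero_of_eq_one_add_div {k b t x : ℝ} (hk : k ≠ 0)
    (ht : t ^ 2 = 1 + (k * b) ^ 2) (hx : x = (1 + t) / k) :
    k * x ^ 2 - 2 * x - k * b ^ 2 = 0 := by
  subst hx
  field_simp
  linear_combination ht

theorem lt_of_quadratic_eq_zero {k b x : ℝ} (hk : 0 < k) (hx : 0 < x)
    (hq : k * x ^ 2 - 2 * x - k * b ^ 2 = 0) : b < x := by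
  have hsq : b ^ 2 < x ^ 2 := by nlinarith
  exact (le_abs_self b).trans_lt (abs_lt_of_sq_lt_sq hsq hx.le)

theorem abs_lt_of_quadratic_eq_zero {k b x : ℝ} (hb : 0 ≤ b) (hkx : k * x < 0)
    (hq : k * x ^ 2 - 2 * x - k * b ^ 2 = 0) : |x| < b := by
  have hscaled : k ^ 2 * (x ^ 2 - b ^ 2) = 2 * (k * x) := by linear_combination k * hq
  have hsq : x ^ 2 < b ^ 2 := by
    by_contra! hle
    nlinarith [mul_nonneg (sq_nonneg k) (sub_nonneg.mpr hle)]
  exact abs_lt_of_sq_lt_sq hsq hb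

theorem quadratic_eq_zero_and_lt_of_eq_add_sqrt {k b x : ℝ} (hk : k < 0)
    (hx : x = (1 + √(1 + (k * b) ^ 2)) / -k) : k * x ^ 2 + 2 * x - k * b ^ 2 = 0 ∧ b < x := by
  have hq : -k * x ^ 2 - 2 * x - -k * b ^ 2 = 0 := quadratic_eq_zero_of_eq_one_add_div
    (neg_ne_zero.mpr hk.ne) (by rw [Real.sq_sqrt (by positivity), neg_mul, neg_sq]) hx
  have hx_pos : 0 < x := hx ▸ div_pos (by positivity) (neg_pos.mpr hk)
  exact ⟨by linear_combination -hq, lt_of_quadratic_eq_zero (neg_pos.mpr hk) hx_pos hq⟩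

theorem quadratic_eq_zero_and_abs_lt_of_eq_sub_sqrt {k b x : ℝ} (hk : k ≠ 0) (hb : 0 < b)
    (hx : x = (1 - √(1 + (k * b) ^ 2)) / k) : k * x ^ 2 - 2 * x - k * b ^ 2 = 0 ∧ |x| < b := by
  have hq := quadratic_eq_zero_of_eq_one_add_div hk (x := x) (t := -√(1 + (k * b) ^ 2))
    (by rw [neg_sq, Real.sq_sqrt (by positivity)]) (by rw [hx, sub_eq_add_neg])
  have hsqrt : 1 < √(1 + (k * b) ^ 2) := by
    rw [Real.lt_sqrt zero_le_one, one_pow, lt_add_iff_pos_right]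
    exact sq_pos_of_ne_zero (mul_ne_zero hk hb.ne')
  have hkx : k * x < 0 := by
    rw [hx, mul_div_cancel₀ _ hk]
    linarith
  exact ⟨hq, abs_lt_of_quadratic_eq_zero hb.le hkx hq⟩

section Equilibrium

variable {α β b p m ρ ρ1 r : ℝ}

theorem abs_cos_lt_one_of_abs_lt_of_lt (hρ : ρ = p + m) (hρ1 : ρ1 = (p - m) / 2)
    (hr : r = -(p * m) - b ^ 2) (hm : |m| < b) (hp : b < p) :
    |(ρ ^ 2 + 2 * r) / (2 * ρ * ρ1)| < 1 := by
  subst hρ hρ1 hr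
  obtain ⟨hm_gt, hm_lt⟩ := abs_lt.mp hm
  have hden : 0 < 2 * (p + m) * ((p - m) / 2) := by
    have : 0 < p + m := by linarith
    have : 0 < p - m := by linarith
    positivity
  rw [abs_div, abs_of_pos hden, div_lt_one hden, abs_lt]
  constructor <;> nlinarith

theorem equilibrium_eqs_of_quadratics (hρ : ρ = p + m) (hρ1 : ρ1 = (p - m) / 2)
    (hr : r = -(p * m) - b ^ 2) (hρ0 : ρ ≠ 0) (hρ10 : ρ1 ≠ 0)
    (hp : (α + β) * p ^ 2 + 2 * p - (α + β) * b ^ 2 = 0)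
    (hm : (β - α) * m ^ 2 - 2 * m - (β - α) * b ^ 2 = 0) :
    α + β * ((ρ ^ 2 + 2 * r) / (2 * ρ * ρ1)) + 2 / ρ = 0 ∧
    α * ((ρ ^ 2 + 2 * r) / (2 * ρ * ρ1)) + 1 / ρ1 + β = 0 ∧
    (2 * α / ρ + β / ρ1) * r + 2 * β * b ^ 2 / ρ1 = 0 := by
  subst hρ hρ1 hr
  have hpm : p - m ≠ 0 := by contrapose! hρ10; rw [hρ10, zero_div]
  refine ⟨?_, ?_, ?_⟩ <;> field_simp
  · linear_combination hp + hm
  · linear_combination hp - hm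
  · linear_combination -2 * m * hp - 2 * p * hm

end Equilibrium

theorem stmt19_general (μ lam a a0 b ρp ρm xt rh1 ρ ρ1 : ℝ)
    (hμ : μ > 0)
    (hb : b > 0)
    (hcond : (1 - lam) * a + lam * a0 < 0)
    (hne : (1 - lam) * a - lam * a0 ≠ 0)
    (hρp : ρp = (1 + Real.sqrt (1 + (μ * ((1 - lam) * a + lam * a0) * b) ^ 2))
        / (-(μ * ((1 - lam) * a + lam * a0))))
    (hρm : ρm = (1 - Real.sqrt (1 + (μ * (lam * a0 - (1 - lam) * a) * b) ^ 2))
        / (μ * (lam * a0 - (1 - lam) * a)))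
    (hxt : xt = -1)
    (hrh1 : rh1 = -(ρp * ρm) - b ^ 2)
    (hρ : ρ = ρp + ρm)
    (hρ1 : ρ1 = (ρp - ρm) / 2) :
    ρp > b ∧ b > |ρm| ∧ ρ > 0 ∧ ρ1 > 0 ∧
    |(ρ ^ 2 + 2 * rh1) / (2 * ρ * ρ1)| < 1 ∧
    (1 - lam) * μ * a + lam * μ * a0 * ((ρ ^ 2 + 2 * rh1) / (2 * ρ * ρ1))
      + (1 - xt) / ρ = 0 ∧
    (1 - lam) * μ * a * ((ρ ^ 2 + 2 * rh1) / (2 * ρ * ρ1)) + 1 / ρ1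
      + lam * μ * a0 = 0 ∧
    μ * (2 * (1 - lam) * a / ρ + lam * a0 / ρ1) * rh1
      + 2 * lam * μ * a0 * b ^ 2 / ρ1 = 0 := by
  have hkm : μ * (lam * a0 - (1 - lam) * a) ≠ 0 :=
    mul_ne_zero hμ.ne' (by contrapose! hne; linarith)
  obtain ⟨hqp, hρp_gt⟩ :=
    quadratic_eq_zero_and_lt_of_eq_add_sqrt (mul_neg_of_pos_of_neg hμ hcond) hρp
  obtain ⟨hqm, hρm_lt⟩ := quadratic_eq_zero_and_abs_lt_of_eq_sub_sqrt hkm hb hρm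
  have hρ_pos : 0 < ρ := by linarith [neg_abs_le ρm]
  have hρ1_pos : 0 < ρ1 := by linarith [le_abs_self ρm]
  obtain ⟨hS1, hS2, hS3⟩ := equilibrium_eqs_of_quadratics (α := (1 - lam) * μ * a)
    (β := lam * μ * a0) hρ hρ1 hrh1 hρ_pos.ne' hρ1_pos.ne' (by linear_combination hqp)
    (by linear_combination hqm)
  subst hxt
  exact ⟨hρp_gt, hρm_lt, hρ_pos, hρ1_pos, abs_cos_lt_one_of_abs_lt_of_lt hρ hρ1 hrh1 hρm_lt hρp_gt,
    by linear_combination hS1, hS2, by linear_combination hS3⟩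

/-- Configuration III, x̃ = −1 general circling equilibrium
(Proposition 5.3(d), with the corrected formula for ρ−): with a0 ≠ 0,
(1−λ)a + λa0 < 0 and (1−λ)a − λa0 ≠ 0, the displayed values satisfy
ρ+ > b > |ρ−|, positivity, the strict dot-product constraint, and the
equilibrium equations (S1)–(S3). -/
theorem stmt19 (μ lam a a0 b ρp ρm xt rh1 ρ ρ1 : ℝ)
    (hμ : μ > 0) (hlam1 : 0 < lam) (hlam2 : lam < 1)
    (ha : a ∈ Set.Icc (-1 : ℝ) 1) (ha0 : a0 ∈ Set.Icc (-1 : ℝ) 1)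
    (hb : b > 0)
    (ha0ne : a0 ≠ 0)
    (hcond : (1 - lam) * a + lam * a0 < 0)
    (hne : (1 - lam) * a - lam * a0 ≠ 0)
    (hρp : ρp = (1 + Real.sqrt (1 + (μ * ((1 - lam) * a + lam * a0) * b) ^ 2))
        / (-(μ * ((1 - lam) * a + lam * a0))))
    (hρm : ρm = (1 - Real.sqrt (1 + (μ * (lam * a0 - (1 - lam) * a) * b) ^ 2))
        / (μ * (lam * a0 - (1 - lam) * a)))
    (hxt : xt = -1)
    (hrh1 : rh1 = -(ρp * ρm) - b ^ 2)
    (hρ : ρ = ρp + ρm)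
    (hρ1 : ρ1 = (ρp - ρm) / 2) :
    ρp > b ∧ b > |ρm| ∧ ρ > 0 ∧ ρ1 > 0 ∧
    |(ρ ^ 2 + 2 * rh1) / (2 * ρ * ρ1)| < 1 ∧
    (1 - lam) * μ * a + lam * μ * a0 * ((ρ ^ 2 + 2 * rh1) / (2 * ρ * ρ1))
      + (1 - xt) / ρ = 0 ∧
    (1 - lam) * μ * a * ((ρ ^ 2 + 2 * rh1) / (2 * ρ * ρ1)) + 1 / ρ1
      + lam * μ * a0 = 0 ∧
    μ * (2 * (1 - lam) * a / ρ + lam * a0 / ρ1) * rh1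
      + 2 * lam * μ * a0 * b ^ 2 / ρ1 = 0 :=
  stmt19_general μ lam a a0 b ρp ρm xt rh1 ρ ρ1 hμ hb hcond hne hρp hρm hxt hrh1 hρ hρ1
end
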